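/- Let Z be standard normal, X_z = (Z - z conditioned on Z > z), and m(z) = E[X_z]. Let f : [0,∞) → [0,1] be continuous nondecreasing with lim_{x→∞} f(x) = 1, such that x ↦ -log(1 - f(x)) is concave. Then there is a universal constant C, independent of f and z, such that E[X_z f(X_z)] / E[f(X_z)] ≤ C·m(z) for all z ∈ ℝ. -/

import Mathlib

/-!
Write `w t = exp (-t²/2)` and `G z = ∫_z^∞ w`, so that `X_z` has density `w (t + z) / G z` on
`(0, ∞)`, mean `m = w z / G z - z` and second moment `1 - z m`; its variance `1 - z m - m²` is
nonnegative. The Mills-ratio bound `G z ≤ w z (z⁴ - z² + 3) / z⁵` and the monotonicity of `m`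
(`m' = m² + z m - 1 ≤ 0`) give `E[X_z²] ≤ K m²` for all `z`, and `P(X_z > m/2) ≥ c > 0`.

On the side of `f`: `q = -log (1 - f)` is concave with `q 0 ≥ 0`, so `q t ≤ (t / a) q a` for
`t ≥ a`, and since `1 - e^{-λ s} ≤ λ (1 - e^{-s})` for `λ ≥ 1`, `f t ≤ f a (1 + t / a)`. With
`a = m/2` this gives `E[X f(X)] ≤ f a (m + 2 E[X²] / m) ≤ (1 + 2K) m f a`, while monotonicity gives
`E[f(X)] ≥ f a P(X > a) ≥ c f a`.
-/

open MeasureTheory Set Filter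

/-- The density on `(0,∞)` of `X_z = (Z - z | Z > z)` for a standard normal `Z`. -/
noncomputable def condDens (z x : ℝ) : ℝ :=
  Real.exp (-(x + z) ^ 2 / 2) / (∫ t in Set.Ioi z, Real.exp (-t ^ 2 / 2))

/-- The conditional mean overshoot `m z = E[X_z]`. -/
noncomputable def condMean (z : ℝ) : ℝ :=
  Real.exp (-z ^ 2 / 2) / (∫ t in Set.Ioi z, Real.exp (-t ^ 2 / 2)) - z

open Real

lemma setIntegral_Ioi_pos {g : ℝ → ℝ} {a : ℝ} (hg : IntegrableOn g (Ioi a))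
    (hpos : ∀ t ∈ Ioi a, 0 < g t) : 0 < ∫ t in Ioi a, g t := by
  refine (setIntegral_pos_iff_support_of_nonneg_ae
    (ae_restrict_of_forall_mem measurableSet_Ioi fun t ht => (hpos t ht).le) hg).2 ?_
  rw [inter_eq_right.2 fun t ht => Function.mem_support.2 (hpos t ht).ne']
  simp

lemma setIntegral_Ioi_comp_add_right (g : ℝ → ℝ) (a z : ℝ) :
    ∫ t in Ioi a, g (t + z) = ∫ u in Ioi (a + z), g u := by
  have h := (measurePreserving_add_right volume z).setIntegral_preimage_emb
    (measurableEmbedding_addRight z) g (Ioi (a + z))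
  rwa [preimage_add_const_Ioi, add_sub_cancel_right] at h

lemma ConcaveOn.le_div_mul {g : ℝ → ℝ} (hg : ConcaveOn ℝ (Ici 0) g) (hg0 : 0 ≤ g 0)
    {a t : ℝ} (ha : 0 < a) (hat : a ≤ t) : g t ≤ t / a * g a := by
  have ht : 0 < t := ha.trans_le hat
  have hat' : 0 ≤ 1 - a / t := sub_nonneg.2 ((div_le_one ht).2 hat)
  have h := hg.2 (mem_Ici.2 ht.le) (mem_Ici.2 le_rfl) (div_nonneg ha.le ht.le) hat'
    (add_sub_cancel _ _)
  have hpt : (a / t) • t + (1 - a / t) • (0 : ℝ) = a := by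
    simp only [smul_eq_mul, mul_zero, add_zero]; field_simp
  rw [hpt, smul_eq_mul, smul_eq_mul] at h
  have h1 : a / t * g t ≤ g a := by nlinarith [mul_nonneg hat' hg0]
  have h2 := mul_le_mul_of_nonneg_left h1 ht.le
  rw [← mul_assoc, mul_div_cancel₀ _ ht.ne'] at h2
  rw [div_mul_eq_mul_div, le_div_iff₀ ha]
  linarith

lemma one_sub_exp_neg_mul_le {c : ℝ} (hc : 1 ≤ c) (s : ℝ) :
    1 - exp (-(c * s)) ≤ c * (1 - exp (-s)) := by
  have h := one_add_mul_self_le_rpow_one_add (by linarith [exp_pos (-s)] : -1 ≤ exp (-s) - 1) hc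
  rw [add_sub_cancel, ← exp_mul] at h
  rw [show -(c * s) = -s * c by ring]
  linarith

noncomputable def gaussWeight (t : ℝ) : ℝ := exp (-t ^ 2 / 2)

noncomputable def gaussTail (z : ℝ) : ℝ := ∫ t in Ioi z, gaussWeight t

lemma condDens_eq (z t : ℝ) : condDens z t = gaussWeight (t + z) / gaussTail z := rfl

lemma condMean_eq (z : ℝ) : condMean z = gaussWeight z / gaussTail z - z := rfl

lemma gaussWeight_pos (t : ℝ) : 0 < gaussWeight t := exp_pos _

lemma gaussWeight_le_one (t : ℝ) : gaussWeight t ≤ 1 :=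
  exp_le_one_iff.2 (by nlinarith [sq_nonneg t])

lemma antitoneOn_gaussWeight : AntitoneOn gaussWeight (Ici 0) := fun s hs _ _ hst =>
  exp_le_exp.2 (by nlinarith [mem_Ici.1 hs])

lemma hasDerivAt_gaussWeight (t : ℝ) : HasDerivAt gaussWeight (-t * gaussWeight t) t := by
  have h := ((hasDerivAt_pow 2 t).neg.div_const 2).exp
  convert h using 1
  · ext s; simp [gaussWeight, neg_div]
  · simp [gaussWeight, neg_div]; ring

lemma continuous_gaussWeight : Continuous gaussWeight := by unfold gaussWeight; fun_prop

lemma integrable_pow_mul_gaussWeight (k : ℕ) : Integrable fun t => t ^ k * gaussWeight t := by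
  have h := integrable_rpow_mul_exp_neg_mul_sq (b := 1 / 2) (by norm_num) (s := k)
    (by linarith [k.cast_nonneg (α := ℝ)])
  refine h.congr (Eventually.of_forall fun t => ?_)
  simp only [rpow_natCast, gaussWeight]
  ring_nf

lemma integrable_gaussWeight : Integrable gaussWeight := by
  simpa using integrable_pow_mul_gaussWeight 0

lemma integrable_mul_gaussWeight : Integrable fun t => t * gaussWeight t := by
  simpa using integrable_pow_mul_gaussWeight 1

lemma tendsto_pow_mul_gaussWeight_atTop (k : ℕ) :
    Tendsto (fun t => t ^ k * gaussWeight t) atTop (nhds 0) := by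
  refine squeeze_zero' ?_ ?_ (tendsto_pow_mul_exp_neg_atTop_nhds_zero k)
  · filter_upwards [eventually_ge_atTop 0] with t ht
    exact mul_nonneg (pow_nonneg ht k) (gaussWeight_pos t).le
  · filter_upwards [eventually_ge_atTop 2] with t ht
    exact mul_le_mul_of_nonneg_left (exp_le_exp.2 (by nlinarith)) (by positivity)

lemma tendsto_gaussWeight_atTop : Tendsto gaussWeight atTop (nhds 0) := by
  simpa using tendsto_pow_mul_gaussWeight_atTop 0

lemma integral_Ioi_mul_gaussWeight (z : ℝ) :
    ∫ t in Ioi z, t * gaussWeight t = gaussWeight z := by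
  have h := integral_Ioi_of_hasDerivAt_of_tendsto' (a := z) (f := fun t => -gaussWeight t)
    (fun t _ => (hasDerivAt_gaussWeight t).neg)
    (by simpa using integrable_mul_gaussWeight.integrableOn)
    (by simpa using tendsto_gaussWeight_atTop.neg)
  simpa using h

lemma integral_Ioi_sq_mul_gaussWeight (z : ℝ) :
    ∫ t in Ioi z, t ^ 2 * gaussWeight t = z * gaussWeight z + gaussTail z := by
  have h := integral_Ioi_of_hasDerivAt_of_tendsto' (a := z)
    (f := fun t => -(t * gaussWeight t)) (f' := fun t => t ^ 2 * gaussWeight t - gaussWeight t)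
    (fun t _ => ((hasDerivAt_id' t).mul (hasDerivAt_gaussWeight t)).neg.congr_deriv (by ring))
    ((integrable_pow_mul_gaussWeight 2).sub integrable_gaussWeight).integrableOn
    (by simpa using (tendsto_pow_mul_gaussWeight_atTop 1).neg)
  rw [integral_sub (integrable_pow_mul_gaussWeight 2).integrableOn
    integrable_gaussWeight.integrableOn] at h
  rw [gaussTail]
  linarith

lemma gaussTail_pos (z : ℝ) : 0 < gaussTail z :=
  setIntegral_Ioi_pos integrable_gaussWeight.integrableOn fun t _ => gaussWeight_pos t

lemma gaussTail_le_integral (z : ℝ) : gaussTail z ≤ ∫ t, gaussWeight t :=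
  setIntegral_le_integral integrable_gaussWeight
    (Eventually.of_forall fun t => (gaussWeight_pos t).le)

lemma antitone_gaussTail : Antitone gaussTail := fun _ _ hab =>
  setIntegral_mono_set integrable_gaussWeight.integrableOn
    (Eventually.of_forall fun t => (gaussWeight_pos t).le) (Ioi_subset_Ioi hab).eventuallyLE

lemma gaussTail_sub_gaussTail (y z : ℝ) :
    gaussTail y - gaussTail z = ∫ t in y..z, gaussWeight t :=
  intervalIntegral.integral_Ioi_sub_Ioi' integrable_gaussWeight.integrableOn
    integrable_gaussWeight.integrableOn

lemma hasDerivAt_gaussTail (z : ℝ) : HasDerivAt gaussTail (-gaussWeight z) z := by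
  have h := ((continuous_gaussWeight.integral_hasStrictDerivAt 0 z).hasDerivAt).const_sub
    (gaussTail 0)
  refine h.congr_of_eventuallyEq (Eventually.of_forall fun y => ?_)
  simp only [← gaussTail_sub_gaussTail]; ring

lemma gaussTail_sub_gaussTail_le {y z : ℝ} (hy : 0 ≤ y) (hyz : y ≤ z) :
    gaussTail y - gaussTail z ≤ (z - y) * gaussWeight y := by
  rw [gaussTail_sub_gaussTail]
  have h := intervalIntegral.integral_mono_on hyz
    (continuous_gaussWeight.intervalIntegrable (μ := volume) _ _)
    (continuous_const.intervalIntegrable _ _) fun t ht =>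
      antitoneOn_gaussWeight (mem_Ici.2 hy) (mem_Ici.2 (hy.trans ht.1)) ht.1
  simpa [mul_comm] using h

lemma tendsto_gaussTail_atTop : Tendsto gaussTail atTop (nhds 0) := by
  have h : Tendsto (fun z => ∫ t in (0 : ℝ)..z, gaussWeight t) atTop (nhds (gaussTail 0)) :=
    intervalIntegral_tendsto_integral_Ioi 0 integrable_gaussWeight.integrableOn tendsto_id
  simpa [← gaussTail_sub_gaussTail] using h.const_sub (gaussTail 0)

lemma gaussTail_le_mills {z : ℝ} (hz : 0 < z) :
    gaussTail z ≤ gaussWeight z * ((z ^ 4 - z ^ 2 + 3) / z ^ 5) := by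
  set F : ℝ → ℝ := fun x => gaussWeight x * ((x ^ 4 - x ^ 2 + 3) / x ^ 5) - gaussTail x
  have hderiv : ∀ x ∈ Ioi (0 : ℝ), HasDerivAt F (-15 * gaussWeight x / x ^ 6) x := by
    intro x hx
    have hx : x ≠ 0 := (mem_Ioi.1 hx).ne'
    have hp : HasDerivAt (fun x : ℝ => x ^ 4 - x ^ 2 + 3) (4 * x ^ 3 - 2 * x) x := by
      simpa using ((hasDerivAt_pow 4 x).sub (hasDerivAt_pow 2 x)).add_const 3
    have h := ((hasDerivAt_gaussWeight x).mul
      (hp.div (hasDerivAt_pow 5 x) (pow_ne_zero 5 hx))).sub (hasDerivAt_gaussTail x)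
    refine h.congr_deriv ?_
    simp only [Pi.div_apply]
    field_simp
    ring
  have hanti : AntitoneOn F (Ioi 0) := by
    refine antitoneOn_of_hasDerivWithinAt_nonpos (f' := fun x => -15 * gaussWeight x / x ^ 6)
      (convex_Ioi 0) (fun x hx => (hderiv x hx).continuousAt.continuousWithinAt) ?_ ?_
    · rw [interior_Ioi]; exact fun x hx => (hderiv x hx).hasDerivWithinAt
    · rw [interior_Ioi]
      exact fun x _ => div_nonpos_of_nonpos_of_nonneg (by nlinarith [gaussWeight_pos x])
        (by positivity)
  have hlim : Tendsto F atTop (nhds 0) := by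
    have hrat : Tendsto (fun x : ℝ => (x ^ 4 - x ^ 2 + 3) / x ^ 5) atTop (nhds 0) := by
      have h : Tendsto (fun y : ℝ => y - y ^ 3 + 3 * y ^ 5) (nhds 0) (nhds 0) := by
        simpa using (show Continuous fun y : ℝ => y - y ^ 3 + 3 * y ^ 5 by fun_prop).tendsto 0
      refine (h.comp tendsto_inv_atTop_zero).congr' ?_
      filter_upwards [eventually_gt_atTop 0] with x hx
      simp only [Function.comp]
      field_simp
    simpa using (tendsto_gaussWeight_atTop.mul hrat).sub tendsto_gaussTail_atTop
  have hF : 0 ≤ F z := le_of_tendsto hlim <| by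
    filter_upwards [eventually_ge_atTop z] with x hx
    exact hanti hz (hz.trans_le hx) hx
  exact sub_nonneg.1 hF

lemma condDens_pos (z t : ℝ) : 0 < condDens z t :=
  div_pos (gaussWeight_pos _) (gaussTail_pos z)

lemma integrable_pow_mul_condDens (z : ℝ) (k : ℕ) : Integrable fun t => t ^ k * condDens z t := by
  have hbinom : Integrable fun u => (u - z) ^ k * gaussWeight u := by
    have h : (fun u => (u - z) ^ k * gaussWeight u) = fun u =>
        ∑ i ∈ Finset.range (k + 1), (-z) ^ (k - i) * k.choose i * (u ^ i * gaussWeight u) := by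
      funext u
      rw [sub_eq_add_neg, add_pow, Finset.sum_mul]
      exact Finset.sum_congr rfl fun i _ => by ring
    rw [h]
    exact integrable_finsetSum _ fun i _ => (integrable_pow_mul_gaussWeight i).const_mul _
  refine ((hbinom.comp_add_right z).div_const (gaussTail z)).congr
    (Eventually.of_forall fun t => ?_)
  simp only [condDens_eq, add_sub_cancel_right, mul_div_assoc]

lemma integrable_condDens (z : ℝ) : Integrable (condDens z) := by
  simpa using integrable_pow_mul_condDens z 0

lemma integrable_mul_condDens (z : ℝ) : Integrable fun t => t * condDens z t := by
  simpa using integrable_pow_mul_condDens z 1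

lemma integral_Ioi_condDens (z a : ℝ) :
    ∫ t in Ioi a, condDens z t = gaussTail (a + z) / gaussTail z := by
  simp only [condDens_eq]
  rw [integral_div, setIntegral_Ioi_comp_add_right gaussWeight a z]
  rfl

lemma integral_Ioi_pow_mul_condDens (z : ℝ) (k : ℕ) :
    ∫ t in Ioi 0, t ^ k * condDens z t =
      (∫ u in Ioi z, (u - z) ^ k * gaussWeight u) / gaussTail z := by
  have h := setIntegral_Ioi_comp_add_right (fun u => (u - z) ^ k * gaussWeight u) 0 z
  simp only [add_sub_cancel_right, zero_add] at h
  simp only [condDens_eq, mul_div_assoc', integral_div, h]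

lemma integral_condDens (z : ℝ) : ∫ t in Ioi 0, condDens z t = 1 := by
  rw [integral_Ioi_condDens, zero_add, div_self (gaussTail_pos z).ne']

lemma integral_mul_condDens (z : ℝ) : ∫ t in Ioi 0, t * condDens z t = condMean z := by
  have h := integral_Ioi_pow_mul_condDens z 1
  simp only [pow_one, sub_mul] at h
  rw [h, integral_sub integrable_mul_gaussWeight.integrableOn
      (integrable_gaussWeight.integrableOn.const_mul z),
    integral_Ioi_mul_gaussWeight, integral_const_mul, condMean_eq, ← gaussTail]
  field_simp [(gaussTail_pos z).ne']

lemma integral_sq_mul_condDens (z : ℝ) :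
    ∫ t in Ioi 0, t ^ 2 * condDens z t = 1 - z * condMean z := by
  have h := integral_Ioi_pow_mul_condDens z 2
  have hexp : ∀ u, (u - z) ^ 2 * gaussWeight u =
      u ^ 2 * gaussWeight u - 2 * z * (u * gaussWeight u) + z ^ 2 * gaussWeight u := fun u => by
    ring
  simp only [hexp] at h
  have hint : IntegrableOn (fun u => u ^ 2 * gaussWeight u - 2 * z * (u * gaussWeight u))
      (Ioi z) :=
    ((integrable_pow_mul_gaussWeight 2).sub (integrable_mul_gaussWeight.const_mul _)).integrableOn
  rw [h, integral_add hint (integrable_gaussWeight.integrableOn.const_mul _),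
    integral_sub (integrable_pow_mul_gaussWeight 2).integrableOn
      (integrable_mul_gaussWeight.integrableOn.const_mul _),
    integral_Ioi_sq_mul_gaussWeight, integral_const_mul, integral_Ioi_mul_gaussWeight,
    integral_const_mul, condMean_eq, ← gaussTail]
  field_simp [(gaussTail_pos z).ne']
  ring

lemma condMean_pos (z : ℝ) : 0 < condMean z := by
  rw [← integral_mul_condDens]
  exact setIntegral_Ioi_pos (integrable_mul_condDens z).integrableOn
    fun t ht => mul_pos ht (condDens_pos z t)

lemma condMean_add_pos (z : ℝ) : 0 < condMean z + z := by
  rw [condMean_eq, sub_add_cancel]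
  exact div_pos (gaussWeight_pos z) (gaussTail_pos z)

lemma condMean_sq_add_mul_le_one (z : ℝ) : condMean z ^ 2 + z * condMean z ≤ 1 := by
  have hvar : 0 ≤ ∫ t in Ioi 0, (t - condMean z) ^ 2 * condDens z t :=
    setIntegral_nonneg measurableSet_Ioi fun t _ =>
      mul_nonneg (sq_nonneg _) (condDens_pos z t).le
  have hexp : ∀ t, (t - condMean z) ^ 2 * condDens z t = t ^ 2 * condDens z t -
      2 * condMean z * (t * condDens z t) + condMean z ^ 2 * condDens z t := fun t => by ring
  have hint : IntegrableOn (fun t => t ^ 2 * condDens z t - 2 * condMean z * (t * condDens z t))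
      (Ioi 0) :=
    ((integrable_pow_mul_condDens z 2).sub ((integrable_mul_condDens z).const_mul _)).integrableOn
  simp only [hexp] at hvar
  rw [integral_add hint ((integrable_condDens z).integrableOn.const_mul _),
    integral_sub (integrable_pow_mul_condDens z 2).integrableOn
      ((integrable_mul_condDens z).integrableOn.const_mul _),
    integral_const_mul, integral_const_mul, integral_sq_mul_condDens, integral_mul_condDens,
    integral_condDens] at hvar
  linarith

lemma hasDerivAt_condMean (z : ℝ) :
    HasDerivAt condMean (condMean z ^ 2 + z * condMean z - 1) z := by
  have hG := (gaussTail_pos z).ne'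
  have h := ((hasDerivAt_gaussWeight z).div (hasDerivAt_gaussTail z) hG).sub (hasDerivAt_id z)
  refine h.congr_deriv ?_
  rw [condMean_eq]
  field_simp
  ring

lemma antitone_condMean : Antitone condMean :=
  antitone_of_deriv_nonpos (fun z => (hasDerivAt_condMean z).differentiableAt) fun z => by
    rw [(hasDerivAt_condMean z).deriv]
    linarith [condMean_sq_add_mul_le_one z]

lemma one_sub_mul_condMean_le_of_two_le {z : ℝ} (hz : 2 ≤ z) :
    1 - z * condMean z ≤ 50 * condMean z ^ 2 := by
  obtain ⟨D, hD_def⟩ : ∃ D : ℝ, D = z ^ 4 - z ^ 2 + 3 := ⟨_, rfl⟩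
  have hz0 : 0 < z := by linarith
  have hD : 0 < D := by nlinarith [sq_nonneg (z ^ 2 - 1)]
  have hmills : z ^ 5 ≤ (condMean z + z) * D := by
    have h := gaussTail_le_mills hz0
    rw [condMean_eq, sub_add_cancel, div_mul_eq_mul_div, le_div_iff₀ (gaussTail_pos z)]
    rw [← hD_def, mul_div_assoc', le_div_iff₀ (by positivity)] at h
    linarith
  set m := condMean z
  set m₀ := (z ^ 3 - 3 * z) / D
  have hm₀ : 0 ≤ m₀ :=
    div_nonneg (by nlinarith [mul_nonneg hz0.le (by nlinarith : (0 : ℝ) ≤ z ^ 2 - 3)]) hD.le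
  have hm₀m : m₀ ≤ m := by rw [div_le_iff₀ hD]; nlinarith
  -- `1 - z m` decreases and `m²` increases in `m ≥ 0`, so the bound at `m₀ ≤ m` suffices.
  have hm₀_bound : 1 - z * m₀ ≤ 50 * m₀ ^ 2 := by
    have h1 : 1 - z * m₀ = (2 * z ^ 2 + 3) / D := by
      simp only [m₀]; field_simp; rw [hD_def]; ring
    rw [h1, div_pow, ← mul_div_assoc, div_le_div_iff₀ hD (by positivity)]
    have hq : (2 * z ^ 2 + 3) * D ≤ 50 * (z ^ 3 - 3 * z) ^ 2 := by
      rw [hD_def]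
      nlinarith [sq_nonneg z, sq_nonneg (z ^ 2 - 4),
        mul_nonneg (mul_nonneg hz0.le hz0.le) (sub_nonneg.2 (show (4 : ℝ) ≤ z ^ 2 by nlinarith))]
    nlinarith [mul_le_mul_of_nonneg_right hq hD.le]
  nlinarith [mul_le_mul_of_nonneg_left hm₀m hz0.le, pow_le_pow_left₀ hm₀ hm₀m 2]

lemma exists_one_sub_mul_condMean_le :
    ∃ K > 0, ∀ z, 1 - z * condMean z ≤ K * condMean z ^ 2 := by
  refine ⟨50 + (condMean 2)⁻¹ ^ 2, by positivity, fun z => ?_⟩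
  have hm := condMean_pos z
  rcases le_total 2 z with hz | hz
  · nlinarith [one_sub_mul_condMean_le_of_two_le hz, sq_nonneg ((condMean 2)⁻¹ * condMean z)]
  · have hmul : -(z * condMean z) ≤ condMean z ^ 2 := by nlinarith [condMean_add_pos z]
    have hone : 1 ≤ ((condMean 2)⁻¹ * condMean z) ^ 2 := by
      have : 1 ≤ (condMean 2)⁻¹ * condMean z := by
        rw [inv_mul_eq_div, one_le_div (condMean_pos 2)]; exact antitone_condMean hz
      nlinarith
    nlinarith

/-- For `z ≥ 0` the mass of `(z, z + m/2]` is at most `(m/2) w z = (m/2)(m + z) G z ≤ G z / 2`;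
for `z ≤ 0` the point `z + m/2` stays below `1 / (2 G 0)`. -/
lemma exists_le_integral_Ioi_half_condMean :
    ∃ c > 0, ∀ z, c ≤ ∫ t in Ioi (condMean z / 2), condDens z t := by
  set b := 1 / (2 * gaussTail 0)
  set T := ∫ t, gaussWeight t
  have hT : 0 < T := (gaussTail_pos 0).trans_le (gaussTail_le_integral 0)
  refine ⟨min (1 / 2) (gaussTail b / T), lt_min (by norm_num) (div_pos (gaussTail_pos b) hT),
    fun z => ?_⟩
  have hG := gaussTail_pos z
  rw [integral_Ioi_condDens, le_div_iff₀ hG]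
  have hw : gaussWeight z = (condMean z + z) * gaussTail z := by
    rw [condMean_eq]; field_simp; ring
  rcases le_total 0 z with hz | hz
  · have h := gaussTail_sub_gaussTail_le hz (by linarith [condMean_pos z] : z ≤ condMean z / 2 + z)
    rw [hw] at h
    nlinarith [min_le_left (1 / 2 : ℝ) (gaussTail b / T), condMean_sq_add_mul_le_one z]
  · have hb : condMean z / 2 + z ≤ b := by
      have h1 : condMean z + z ≤ 1 / gaussTail 0 := by
        rw [condMean_eq, sub_add_cancel]
        exact div_le_div₀ zero_le_one (gaussWeight_le_one z) (gaussTail_pos 0)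
          (antitone_gaussTail hz)
      have h2 : b = 1 / gaussTail 0 / 2 := by simp only [b]; ring
      linarith
    calc min (1 / 2) (gaussTail b / T) * gaussTail z ≤ gaussTail b / T * T :=
          mul_le_mul (min_le_right _ _) (gaussTail_le_integral z) hG.le
            (div_pos (gaussTail_pos b) hT).le
      _ = gaussTail b := div_mul_cancel₀ _ hT.ne'
      _ ≤ gaussTail (condMean z / 2 + z) := antitone_gaussTail hb

section ConcaveNegLogOneSub

variable {f : ℝ → ℝ}

lemma neg_log_one_sub_nonneg (hbd : ∀ x ∈ Ici (0 : ℝ), 0 ≤ f x ∧ f x ≤ 1) {x : ℝ}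
    (hx : x ∈ Ici 0) : 0 ≤ -log (1 - f x) :=
  neg_nonneg.2 (log_nonpos (by linarith [(hbd x hx).2]) (by linarith [(hbd x hx).1]))

/-- Where `f = 1`, the junk value `log 0 = 0` makes `-log (1 - f)` vanish, and concavity then
forces `-log (1 - f)` to vanish further left as well. -/
lemma eq_one_of_pos_of_eq_one_of_le (hbd : ∀ x ∈ Ici (0 : ℝ), 0 ≤ f x ∧ f x ≤ 1)
    (hconc : ConcaveOn ℝ (Ici 0) fun x => -log (1 - f x)) {x₀ b : ℝ} (hx₀ : f x₀ = 1)
    (hb : 0 ≤ b) (hbx : b ≤ x₀) (hfb : 0 < f b) : f b = 1 := by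
  by_contra hne
  have hfb1 : f b < 1 := lt_of_le_of_ne (hbd b hb).2 hne
  have hwI : x₀ + 1 ∈ Ici (0 : ℝ) := mem_Ici.2 (by linarith)
  have hq : -log (1 - f b) ≤ -log (1 - f x₀) :=
    hconc.left_le_of_le_right'' (mem_Ici.2 hb) hwI hbx (lt_add_one x₀)
      (by simpa [hx₀] using neg_log_one_sub_nonneg hbd hwI)
  have hlog : log (1 - f b) < 0 := log_neg (by linarith) (by linarith)
  simp only [hx₀, sub_self, log_zero, neg_zero] at hq
  linarith

lemma eq_one_of_eq_one_of_le (hbd : ∀ x ∈ Ici (0 : ℝ), 0 ≤ f x ∧ f x ≤ 1)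
    (hconc : ConcaveOn ℝ (Ici 0) fun x => -log (1 - f x)) (hcont : ContinuousOn f (Ici 0))
    {x₀ b : ℝ} (hx₀ : f x₀ = 1) (hb : 0 ≤ b) (hbx : b ≤ x₀) : f b = 1 := by
  by_contra hne
  have hfb : f b = 0 := by
    by_contra h0
    exact hne (eq_one_of_pos_of_eq_one_of_le hbd hconc hx₀ hb hbx
      (lt_of_le_of_ne (hbd b hb).1 (Ne.symm h0)))
  obtain ⟨c, hc, hfc⟩ := intermediate_value_Icc hbx
    (hcont.mono fun x hx => mem_Ici.2 (hb.trans hx.1))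
    (show (1 / 2 : ℝ) ∈ Icc (f b) (f x₀) by rw [hfb, hx₀]; norm_num)
  have := eq_one_of_pos_of_eq_one_of_le hbd hconc hx₀ (hb.trans hc.1) hc.2
    (by rw [hfc]; norm_num)
  linarith

lemma le_mul_one_add_div (hbd : ∀ x ∈ Ici (0 : ℝ), 0 ≤ f x ∧ f x ≤ 1)
    (hconc : ConcaveOn ℝ (Ici 0) fun x => -log (1 - f x)) (hcont : ContinuousOn f (Ici 0))
    (hmono : MonotoneOn f (Ici 0)) {a t : ℝ} (ha : 0 < a) (ht : 0 ≤ t) :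
    f t ≤ f a * (1 + t / a) := by
  have haI : a ∈ Ici (0 : ℝ) := mem_Ici.2 ha.le
  have htI : t ∈ Ici (0 : ℝ) := mem_Ici.2 ht
  have hta : 0 ≤ t / a := div_nonneg ht ha.le
  rcases le_total t a with hle | hat
  · nlinarith [hmono htI haI hle, (hbd a haI).1]
  by_cases hfa : f a = 1
  · rw [hfa]; linarith [(hbd t htI).2]
  have hft : f t < 1 := lt_of_le_of_ne (hbd t htI).2
    fun h => hfa (eq_one_of_eq_one_of_le hbd hconc hcont h ha.le hat)
  have hfa1 : f a < 1 := (hmono haI htI hat).trans_lt hft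
  have hexp : ∀ x, f x < 1 → f x = 1 - exp (-(-log (1 - f x))) := fun x hx => by
    rw [neg_neg, exp_log (by linarith)]; ring
  have hq := hconc.le_div_mul (neg_log_one_sub_nonneg hbd (mem_Ici.2 le_rfl)) ha hat
  calc f t = 1 - exp (-(-log (1 - f t))) := hexp t hft
    _ ≤ 1 - exp (-(t / a * -log (1 - f a))) := by gcongr
    _ ≤ t / a * (1 - exp (-(-log (1 - f a)))) :=
        one_sub_exp_neg_mul_le ((one_le_div ha).2 hat) _
    _ = t / a * f a := by rw [← hexp a hfa1]
    _ ≤ f a * (1 + t / a) := by nlinarith [(hbd a haI).1]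

end ConcaveNegLogOneSub

section WeightedIntegrals

variable {f : ℝ → ℝ} (z : ℝ)

lemma integrableOn_mul_of_bounded {g : ℝ → ℝ} (hg : Integrable g)
    (hf : AEStronglyMeasurable f (volume.restrict (Ioi 0)))
    (hbd : ∀ t ∈ Ioi (0 : ℝ), 0 ≤ f t ∧ f t ≤ 1) :
    IntegrableOn (fun t => f t * g t) (Ioi 0) :=
  hg.integrableOn.bdd_mul hf (c := 1) <|
    ae_restrict_of_forall_mem measurableSet_Ioi fun t ht => by
      rw [Real.norm_eq_abs, abs_of_nonneg (hbd t ht).1]; exact (hbd t ht).2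

lemma setIntegral_mul_mul_condDens_le (hf : AEStronglyMeasurable f (volume.restrict (Ioi 0)))
    (hbd : ∀ t ∈ Ioi (0 : ℝ), 0 ≤ f t ∧ f t ≤ 1) {a : ℝ} (ha : 0 < a)
    (hle : ∀ t ∈ Ioi (0 : ℝ), f t ≤ f a * (1 + t / a)) :
    ∫ t in Ioi 0, t * f t * condDens z t ≤ f a * (condMean z + (1 - z * condMean z) / a) := by
  have hint : IntegrableOn (fun t => t * f t * condDens z t) (Ioi 0) :=
    (integrableOn_mul_of_bounded (integrable_mul_condDens z) hf hbd).congr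
      (Eventually.of_forall fun t => by ring)
  have hmom : IntegrableOn (fun t => t * condDens z t + t ^ 2 * condDens z t / a) (Ioi 0) :=
    ((integrable_mul_condDens z).add ((integrable_pow_mul_condDens z 2).div_const a)).integrableOn
  calc ∫ t in Ioi 0, t * f t * condDens z t
      ≤ ∫ t in Ioi 0, f a * (t * condDens z t + t ^ 2 * condDens z t / a) :=
        setIntegral_mono_on hint (hmom.const_mul _) measurableSet_Ioi fun t ht => by
          have h := mul_le_mul_of_nonneg_right (hle t ht)
            (mul_pos (mem_Ioi.1 ht) (condDens_pos z t)).le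
          calc t * f t * condDens z t = f t * (t * condDens z t) := by ring
            _ ≤ f a * (1 + t / a) * (t * condDens z t) := h
            _ = _ := by field_simp
    _ = f a * (condMean z + (1 - z * condMean z) / a) := by
        rw [integral_const_mul, integral_add (integrable_mul_condDens z).integrableOn
          ((integrable_pow_mul_condDens z 2).div_const a).integrableOn, integral_div,
          integral_mul_condDens, integral_sq_mul_condDens]

lemma mul_integral_Ioi_condDens_le (hf : AEStronglyMeasurable f (volume.restrict (Ioi 0)))
    (hbd : ∀ t ∈ Ioi (0 : ℝ), 0 ≤ f t ∧ f t ≤ 1) (hmono : MonotoneOn f (Ici 0)) {a : ℝ}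
    (ha : 0 ≤ a) : f a * ∫ t in Ioi a, condDens z t ≤ ∫ t in Ioi 0, f t * condDens z t := by
  have hint := integrableOn_mul_of_bounded (integrable_condDens z) hf hbd
  have hsub : Ioi a ⊆ Ioi 0 := Ioi_subset_Ioi ha
  rw [← integral_const_mul]
  calc ∫ t in Ioi a, f a * condDens z t ≤ ∫ t in Ioi a, f t * condDens z t :=
        setIntegral_mono_on ((integrable_condDens z).integrableOn.const_mul _)
          (hint.mono_set hsub) measurableSet_Ioi fun t ht =>
            mul_le_mul_of_nonneg_right (hmono (mem_Ici.2 ha)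
              (mem_Ici.2 (ha.trans (le_of_lt ht))) (le_of_lt ht)) (condDens_pos z t).le
    _ ≤ ∫ t in Ioi 0, f t * condDens z t :=
        setIntegral_mono_set hint
          (ae_restrict_of_forall_mem measurableSet_Ioi fun t ht =>
            mul_nonneg (hbd t ht).1 (condDens_pos z t).le) hsub.eventuallyLE

end WeightedIntegrals

theorem weighted_mean_upper_bound :
    ∃ C > (0 : ℝ), ∀ (f : ℝ → ℝ) (z : ℝ),
      ContinuousOn f (Set.Ici 0) →
      MonotoneOn f (Set.Ici 0) →
      (∀ x ∈ Set.Ici (0 : ℝ), 0 ≤ f x ∧ f x ≤ 1) →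
      Tendsto f atTop (nhds 1) →
      ConcaveOn ℝ (Set.Ici 0) (fun x => -Real.log (1 - f x)) →
      (∫ t in Set.Ioi (0 : ℝ), t * f t * condDens z t) /
          (∫ t in Set.Ioi (0 : ℝ), f t * condDens z t) ≤ C * condMean z := by
  obtain ⟨K, hK, hKm⟩ := exists_one_sub_mul_condMean_le
  obtain ⟨c, hc, hcm⟩ := exists_le_integral_Ioi_half_condMean
  refine ⟨(1 + 2 * K) / c, by positivity, fun f z hcont hmono hbd _ hconc => ?_⟩
  set m := condMean z
  have hm : 0 < m := condMean_pos z
  have ha : 0 < m / 2 := half_pos hm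
  have hf : AEStronglyMeasurable f (volume.restrict (Ioi 0)) :=
    (hcont.mono Ioi_subset_Ici_self).aestronglyMeasurable measurableSet_Ioi
  have hbd' : ∀ t ∈ Ioi (0 : ℝ), 0 ≤ f t ∧ f t ≤ 1 := fun t ht => hbd t (mem_Ici.2 (le_of_lt ht))
  have hfa : 0 ≤ f (m / 2) := (hbd _ (mem_Ici.2 ha.le)).1
  have hN := setIntegral_mul_mul_condDens_le z hf hbd' ha fun t ht =>
    le_mul_one_add_div hbd hconc hcont hmono ha (le_of_lt ht)
  have hD := mul_integral_Ioi_condDens_le z hf hbd' hmono ha.le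
  have hsecond : (1 - z * m) / (m / 2) ≤ 2 * K * m := by
    rw [div_le_iff₀ ha]; nlinarith [hKm z]
  refine div_le_of_le_mul₀ (setIntegral_nonneg measurableSet_Ioi fun t ht =>
    mul_nonneg (hbd' t ht).1 (condDens_pos z t).le) (by positivity) ?_
  calc ∫ t in Ioi 0, t * f t * condDens z t ≤ f (m / 2) * (m + (1 - z * m) / (m / 2)) := hN
    _ ≤ f (m / 2) * ((1 + 2 * K) * m) := by gcongr; linarith
    _ = (1 + 2 * K) / c * m * (f (m / 2) * c) := by field_simp
    _ ≤ (1 + 2 * K) / c * m * (f (m / 2) * ∫ t in Ioi (m / 2), condDens z t) := by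
        gcongr; exact hcm z
    _ ≤ (1 + 2 * K) / c * m * ∫ t in Ioi 0, f t * condDens z t := by gcongr
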